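/- Let $m, r$ be positive integers, $A = \mathbb{C}[z]/(z^m)$, and $B = \mathbb{C}[w]/(w^{mr})$, regarded as an $A$-algebra via $z \mapsto w^r$, so that $B$ is a free $A$-module of rank $r$ with basis $1, w, \dots, w^{r-1}$. For $0 \le k \le r-1$ set $V_k = w^k B$ and $\overline{V}_k = w^k B / w^{mr-r+k+1} B$. Suppose given $A$-linear maps $h_k : \overline{V}_k \to \overline{V}_k$ for $0 \le k \le r-1$ such that: (i) for each $1 \le k \le r-1$, the map $\overline{V}_k \to \overline{V}_{k-1}$ induced by the inclusion $w^kB \subseteq w^{k-1}B$ intertwines $h_k$ with $h_{k-1}$; and (ii) the map $\overline{V}_0 \to \overline{V}_{r-1}$ induced by multiplication by $z$ (which maps $B$ into $w^{r-1}B$) intertwines $h_0$ with $h_{r-1}$. Then there exists an $A$-linear endomorphism $h$ of $B$ with $h(w^kB) \subseteq w^kB$ for every $0 \le k \le r-1$ and such that $h$ induces $h_k$ on each quotient $\overline{V}_k$. Moreover, the trace of $h$ as an endomorphism of the free $A$-module $B$ depends only on the family $(h_k)$ and not on the choice of $h$. -/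

import Mathlib

open Polynomial

noncomputable section

/-- The truncated polynomial ring `ℂ[z]/(z^n)`. -/
abbrev TruncC (n : ℕ) : Type :=
  Polynomial ℂ ⧸ Ideal.span {(X : Polynomial ℂ) ^ n}

/-- The class of the variable in `ℂ[z]/(z^n)`. -/
abbrev wC (n : ℕ) : TruncC n :=
  Ideal.Quotient.mk (Ideal.span {(X : Polynomial ℂ) ^ n}) X

section AuxBasis

set_option linter.unusedSectionVars false

def tpb (n : ℕ) : PowerBasis ℂ (TruncC n) :=
  AdjoinRoot.powerBasis (f := (X:Polynomial ℂ)^n) (pow_ne_zero n X_ne_zero)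

lemma tpb_dim (n : ℕ) : (tpb n).dim = n := by simp [tpb, AdjoinRoot.powerBasis]
lemma tpb_basis (n : ℕ) (i : Fin (tpb n).dim) : (tpb n).basis i = wC n ^ (i:ℕ) := by
  rw [PowerBasis.basis_eq_pow]; rfl

lemma wpow_eq_zero {n j : ℕ} (h : n ≤ j) : wC n ^ j = 0 := by
  have : wC n ^ n = 0 := by
    rw [← map_pow, Ideal.Quotient.eq_zero_iff_mem]; exact Ideal.mem_span_singleton_self _
  calc wC n ^ j = wC n ^ n * wC n ^ (j - n) := by rw [← pow_add]; congr 1; omega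
  _ = 0 := by rw [this, zero_mul]

instance (n : ℕ) : FiniteDimensional ℂ (TruncC n) :=
  Module.Finite.of_basis (tpb n).basis

lemma trunc_finrank (n : ℕ) : Module.finrank ℂ (TruncC n) = n := by
  rw [(tpb n).finrank, tpb_dim]

variable (m r : ℕ) [Algebra (TruncC m) (TruncC (m * r))]
  [IsScalarTower ℂ (TruncC m) (TruncC (m * r))]

def phiMap : (Fin r → TruncC m) →ₗ[TruncC m] TruncC (m * r) :=
  Fintype.linearCombination (TruncC m) (fun i : Fin r => wC (m * r) ^ (i : ℕ))

lemma phiMap_apply (f : Fin r → TruncC m) :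
    phiMap m r f = ∑ i : Fin r, f i • wC (m * r) ^ (i : ℕ) := by
  simp [phiMap, Fintype.linearCombination_apply]

lemma zpow_smul (halg : algebraMap (TruncC m) (TruncC (m * r)) (wC m) = wC (m * r) ^ r)
    (q : ℕ) (x : TruncC (m * r)) :
    (wC m) ^ q • x = wC (m * r) ^ (r * q) * x := by
  rw [Algebra.smul_def, map_pow, halg, ← pow_mul, mul_comm r q]

lemma phiMap_bij (hm : 0 < m) (hr : 0 < r)
    (halg : algebraMap (TruncC m) (TruncC (m * r)) (wC m) = wC (m * r) ^ r) :
    Function.Bijective (phiMap m r) := by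
  have hsurj : Function.Surjective (phiMap m r) := by
    have hmem : ∀ j : ℕ, wC (m * r) ^ j ∈ LinearMap.range (phiMap m r) := by
      intro j
      refine ⟨Pi.single ⟨j % r, Nat.mod_lt _ hr⟩ ((wC m) ^ (j / r)), ?_⟩
      rw [phiMap_apply, Finset.sum_eq_single (⟨j % r, Nat.mod_lt _ hr⟩ : Fin r)]
      · rw [Pi.single_eq_same, zpow_smul m r halg, ← pow_add]
        congr 1; simpa using Nat.div_add_mod j r
      · intro b _ hb; rw [Pi.single_eq_of_ne hb, Algebra.smul_def, map_zero, zero_mul]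
      · intro hb; exact absurd (Finset.mem_univ _) hb
    intro x
    have hx : x ∈ Submodule.restrictScalars ℂ (LinearMap.range (phiMap m r)) := by
      have := Module.Basis.sum_repr (tpb (m * r)).basis x
      rw [← this]
      refine Submodule.sum_mem _ fun i _ => Submodule.smul_mem _ _ ?_
      rw [tpb_basis]
      exact hmem _
    exact hx
  constructor
  · have h1 : Module.finrank ℂ (Fin r → TruncC m) = Module.finrank ℂ (TruncC (m * r)) := by
      simp [Module.finrank_pi_fintype, trunc_finrank, mul_comm]
    let φ₀ := (phiMap m r).restrictScalars ℂ
    have hs : Function.Surjective φ₀ := hsurj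
    have hinj : Function.Injective φ₀ := by
      have := LinearMap.finrank_range_add_finrank_ker φ₀
      rw [LinearMap.range_eq_top.mpr hs, finrank_top, h1] at this
      rw [← LinearMap.ker_eq_bot]
      have : Module.finrank ℂ (LinearMap.ker φ₀) = 0 := by omega
      exact Submodule.finrank_eq_zero.mp this
    exact hinj
  · exact hsurj

def bB (hm : 0 < m) (hr : 0 < r)
    (halg : algebraMap (TruncC m) (TruncC (m * r)) (wC m) = wC (m * r) ^ r) :
    Module.Basis (Fin r) (TruncC m) (TruncC (m * r)) :=
  Module.Basis.ofEquivFun (LinearEquiv.ofBijective (phiMap m r) (phiMap_bij m r hm hr halg)).symm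

lemma bB_apply (hm : 0 < m) (hr : 0 < r)
    (halg : algebraMap (TruncC m) (TruncC (m * r)) (wC m) = wC (m * r) ^ r) (i : Fin r) :
    bB m r hm hr halg i = wC (m * r) ^ (i : ℕ) := by
  have := congrFun (Module.Basis.coe_ofEquivFun
    (LinearEquiv.ofBijective (phiMap m r) (phiMap_bij m r hm hr halg)).symm) i
  rw [bB, this, LinearEquiv.symm_symm, LinearEquiv.ofBijective_apply,
    phiMap_apply, Finset.sum_eq_single i]
  · rw [Pi.single_eq_same, Algebra.smul_def, map_one, one_mul]
  · intro b _ hb; rw [Pi.single_eq_of_ne hb, Algebra.smul_def, map_zero, zero_mul]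
  · intro hb; exact absurd (Finset.mem_univ _) hb

end AuxBasis

variable (m r : ℕ) [Algebra (TruncC m) (TruncC (m * r))]

/-- The `A`-submodule `V_j = w^j B ⊆ B`, for `A = ℂ[z]/(z^m)`, `B = ℂ[w]/(w^{mr})`. -/
def Vfil (j : ℕ) : Submodule (TruncC m) (TruncC (m * r)) :=
  (Ideal.span {wC (m * r) ^ j}).restrictScalars (TruncC m)

theorem Vfil_antitone {i j : ℕ} (h : i ≤ j) : Vfil m r j ≤ Vfil m r i := by
  intro x hx
  simp only [Vfil, Submodule.restrictScalars_mem] at hx ⊢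
  exact Ideal.span_singleton_le_span_singleton.mpr (pow_dvd_pow _ h) hx

/-- The submodule of `V_k` by which one divides, namely `w^{mr-r+k+1} B = z^{m-1} V_{k+1}`. -/
def Vq (k : ℕ) : Submodule (TruncC m) ↥(Vfil m r k) :=
  (Vfil m r (m * r - r + k + 1)).comap (Vfil m r k).subtype

instance Vfil_addCommGroup (k : ℕ) : AddCommGroup ↥(Vfil m r k) :=
  Submodule.addCommGroup _

/-- The quotient `V̄_k = V_k / z^{m-1} V_{k+1} = w^k B / w^{mr-r+k+1} B`. -/
abbrev Vbar (k : ℕ) : Type := ↥(Vfil m r k) ⧸ Vq m r k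

/-- The map `V̄_k → V̄_{k-1}` induced by the inclusion `w^k B ⊆ w^{k-1} B`. -/
def iotaBar (k : ℕ) : Vbar m r k →ₗ[TruncC m] Vbar m r (k - 1) :=
  Submodule.mapQ _ _ (Submodule.inclusion (Vfil_antitone m r (Nat.sub_le k 1)))
    (by
      intro x hx
      simp only [Vq, Submodule.mem_comap, Submodule.subtype_apply] at hx ⊢
      rw [Submodule.coe_inclusion]
      exact Vfil_antitone m r (by omega) hx)

/-- Multiplication by `z` as a map `V_0 → V_{r-1}` (it maps `B` into `w^{r-1} B`). -/
def zMul (halg : algebraMap (TruncC m) (TruncC (m * r)) (wC m) = wC (m * r) ^ r) :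
    ↥(Vfil m r 0) →ₗ[TruncC m] ↥(Vfil m r (r - 1)) :=
  (LinearMap.lsmul (TruncC m) (TruncC (m * r)) (wC m)).restrict
    (p := Vfil m r 0) (q := Vfil m r (r - 1))
    (fun x _ => by
      simp only [LinearMap.lsmul_apply, Vfil, Submodule.restrictScalars_mem,
        Algebra.smul_def, halg]
      exact Ideal.mem_span_singleton.mpr ((pow_dvd_pow _ (Nat.sub_le r 1)).mul_right _))

/-- The map `V̄_0 → V̄_{r-1}` induced by multiplication by `z`. -/
def zBar (hm : 0 < m) (hr : 0 < r)
    (halg : algebraMap (TruncC m) (TruncC (m * r)) (wC m) = wC (m * r) ^ r) :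
    Vbar m r 0 →ₗ[TruncC m] Vbar m r (r - 1) :=
  Submodule.mapQ _ _ (zMul m r halg)
    (by
      intro x hx
      simp only [Vq, Submodule.mem_comap, Submodule.subtype_apply, Vfil,
        Submodule.restrictScalars_mem] at hx ⊢
      show wC m • (x : TruncC (m * r))
          ∈ Ideal.span {wC (m * r) ^ (m * r - r + (r - 1) + 1)}
      rw [Algebra.smul_def, halg, Ideal.mem_span_singleton]
      have hx : (x : TruncC (m * r)) ∈ Ideal.span {wC (m * r) ^ (m * r - r + 0 + 1)} := hx
      rw [Ideal.mem_span_singleton] at hx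
      have hrm : r ≤ m * r := Nat.le_mul_of_pos_left r hm
      have h1 : wC (m * r) ^ (m * r - r + (r - 1) + 1)
          ∣ wC (m * r) ^ (r + (m * r - r + 0 + 1)) := pow_dvd_pow _ (by omega)
      have h2 : wC (m * r) ^ (r + (m * r - r + 0 + 1)) ∣ wC (m * r) ^ r * ↑x := by
        rw [pow_add]
        exact mul_dvd_mul_left _ hx
      exact h1.trans h2)

section Aux2

set_option linter.unusedSectionVars false

variable {m r} in
lemma wmem {k j : ℕ} (h : k ≤ j) : wC (m * r) ^ j ∈ Vfil m r k := by
  simp only [Vfil, Submodule.restrictScalars_mem]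
  exact Ideal.mem_span_singleton.mpr (pow_dvd_pow _ h)

lemma zsmulMemV [IsScalarTower ℂ (TruncC m) (TruncC (m * r))] (halg : algebraMap (TruncC m) (TruncC (m * r)) (wC m) = wC (m * r) ^ r)
    {q s : ℕ} {y : TruncC (m * r)} (hy : y ∈ Vfil m r s) :
    (wC m) ^ q • y ∈ Vfil m r (r * q + s) := by
  simp only [Vfil, Submodule.restrictScalars_mem, Ideal.mem_span_singleton] at hy ⊢
  rw [zpow_smul m r halg, pow_add]
  exact mul_dvd_mul dvd_rfl hy

lemma zsmulMemV1 [IsScalarTower ℂ (TruncC m) (TruncC (m * r))] (halg : algebraMap (TruncC m) (TruncC (m * r)) (wC m) = wC (m * r) ^ r)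
    {s : ℕ} {y : TruncC (m * r)} (hy : y ∈ Vfil m r s) :
    wC m • y ∈ Vfil m r (r + s) := by
  have := zsmulMemV m r halg (q := 1) hy
  rwa [pow_one, mul_one] at this

lemma Vfil_decomp [IsScalarTower ℂ (TruncC m) (TruncC (m * r))] (hm : 0 < m) (hr : 0 < r)
    (halg : algebraMap (TruncC m) (TruncC (m * r)) (wC m) = wC (m * r) ^ r)
    {k : ℕ} {x : TruncC (m * r)} (hx : x ∈ Vfil m r k) :
    ∃ a : Fin r → TruncC m, x = ∑ i : Fin r, a i • wC (m * r) ^ (k + (i : ℕ)) := by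
  simp only [Vfil, Submodule.restrictScalars_mem, Ideal.mem_span_singleton'] at hx
  obtain ⟨y, hy⟩ := hx
  refine ⟨fun i => (bB m r hm hr halg).repr y i, ?_⟩
  conv_lhs => rw [← hy, ← Module.Basis.sum_repr (bB m r hm hr halg) y]
  rw [Finset.sum_mul]
  refine Finset.sum_congr rfl fun i _ => ?_
  rw [bB_apply, smul_mul_assoc, ← pow_add, add_comm]

lemma repr_pow [IsScalarTower ℂ (TruncC m) (TruncC (m * r))] (hm : 0 < m) (hr : 0 < r)
    (halg : algebraMap (TruncC m) (TruncC (m * r)) (wC m) = wC (m * r) ^ r) (e : ℕ) :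
    (bB m r hm hr halg).repr (wC (m * r) ^ e) =
      Finsupp.single ⟨e % r, Nat.mod_lt _ hr⟩ ((wC m) ^ (e / r)) := by
  have h1 : wC (m * r) ^ e
      = (wC m) ^ (e / r) • bB m r hm hr halg ⟨e % r, Nat.mod_lt _ hr⟩ := by
    rw [bB_apply, zpow_smul m r halg, ← pow_add]
    congr 1; simpa using (Nat.div_add_mod e r).symm
  rw [h1, map_smul, Module.Basis.repr_self, Finsupp.smul_single, smul_eq_mul, mul_one]

lemma iotaBar_mk (k : ℕ) (x : TruncC (m * r)) (hx : x ∈ Vfil m r k) :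
    iotaBar m r k (Submodule.Quotient.mk ⟨x, hx⟩)
      = (Submodule.Quotient.mk ⟨x, Vfil_antitone m r (Nat.sub_le k 1) hx⟩
          : Vbar m r (k - 1)) := by
  rw [iotaBar, Submodule.mapQ_apply]
  rfl

lemma zBar_mk [IsScalarTower ℂ (TruncC m) (TruncC (m * r))] (hm : 0 < m) (hr : 0 < r)
    (halg : algebraMap (TruncC m) (TruncC (m * r)) (wC m) = wC (m * r) ^ r)
    (x : TruncC (m * r)) (hx : x ∈ Vfil m r 0) :
    zBar m r hm hr halg (Submodule.Quotient.mk ⟨x, hx⟩)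
      = (Submodule.Quotient.mk ⟨wC m • x,
          Vfil_antitone m r (by omega) (zsmulMemV1 m r halg hx)⟩
          : Vbar m r (r - 1)) := by
  rw [zBar, Submodule.mapQ_apply]
  rfl

lemma mkV_congr {k : ℕ} {x y : TruncC (m * r)} (hxy : x = y)
    (hx : x ∈ Vfil m r k) (hy : y ∈ Vfil m r k) :
    (Submodule.Quotient.mk ⟨x, hx⟩ : Vbar m r k) = Submodule.Quotient.mk ⟨y, hy⟩ := by
  subst hxy; rfl

lemma descend
    (h : (k : ℕ) → Vbar m r k →ₗ[TruncC m] Vbar m r k)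
    (hcompat : ∀ k, 1 ≤ k → k ≤ r - 1 →
      iotaBar m r k ∘ₗ h k = h (k - 1) ∘ₗ iotaBar m r k)
    {K : ℕ} (hK : K ≤ r - 1) {x y : TruncC (m * r)}
    (hx : x ∈ Vfil m r K) (hy : y ∈ Vfil m r K)
    (hbase : h K (Submodule.Quotient.mk ⟨x, hx⟩)
      = (Submodule.Quotient.mk ⟨y, hy⟩ : Vbar m r K)) :
    ∀ d k, ∀ hdk : k + d = K,
      h k (Submodule.Quotient.mk ⟨x, Vfil_antitone m r (by omega) hx⟩)
        = (Submodule.Quotient.mk ⟨y, Vfil_antitone m r (by omega) hy⟩ : Vbar m r k) := by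
  intro d
  induction d with
  | zero =>
      intro k hk
      obtain rfl : k = K := by omega
      exact hbase
  | succ d ih =>
      intro k hk
      have step := hcompat (k + 1) (by omega) (by omega)
      have ih' := ih (k + 1) (by omega)
      have e := congrArg (iotaBar m r (k + 1)) ih'
      rw [← LinearMap.comp_apply, step, LinearMap.comp_apply,
        iotaBar_mk, iotaBar_mk] at e
      exact e

end Aux2

set_option maxHeartbeats 1600000 in
set_option synthInstance.maxHeartbeats 400000 in
/-- Lemma 6.1 of the paper.  Let `A = ℂ[z]/(z^m)`, `B = ℂ[w]/(w^{mr})` (an `A`-algebra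
via `z ↦ w^r`), `V_k = w^k B` and `V̄_k = w^k B / w^{mr-r+k+1} B`.  Any family of
`A`-linear maps `h_k : V̄_k → V̄_k` compatible with the maps induced by the inclusions
`V_k ⊆ V_{k-1}` and with multiplication by `z : V̄_0 → V̄_{r-1}` lifts to an `A`-linear
endomorphism `H` of `B` preserving each `V_k`; moreover the trace of any such lift `H`
depends only on the family `(h_k)`. -/
theorem stmt7 (hm : 0 < m) (hr : 0 < r)
    [IsScalarTower ℂ (TruncC m) (TruncC (m * r))]
    (halg : algebraMap (TruncC m) (TruncC (m * r)) (wC m) = wC (m * r) ^ r)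
    (h : (k : ℕ) → Vbar m r k →ₗ[TruncC m] Vbar m r k)
    (hcompat : ∀ k, 1 ≤ k → k ≤ r - 1 →
      iotaBar m r k ∘ₗ h k = h (k - 1) ∘ₗ iotaBar m r k)
    (hz : zBar m r hm hr halg ∘ₗ h 0 = h (r - 1) ∘ₗ zBar m r hm hr halg) :
    (∃ H : TruncC (m * r) →ₗ[TruncC m] TruncC (m * r),
      ∃ hpres : ∀ k, k ≤ r - 1 → ∀ x ∈ Vfil m r k, H x ∈ Vfil m r k,
        ∀ k, ∀ hk : k ≤ r - 1, ∀ x : ↥(Vfil m r k),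
          h k (Submodule.Quotient.mk x)
            = Submodule.Quotient.mk (⟨H x.1, hpres k hk x.1 x.2⟩ : ↥(Vfil m r k))) ∧
    (∀ H H' : TruncC (m * r) →ₗ[TruncC m] TruncC (m * r),
      (∃ hpres : ∀ k, k ≤ r - 1 → ∀ x ∈ Vfil m r k, H x ∈ Vfil m r k,
        ∀ k, ∀ hk : k ≤ r - 1, ∀ x : ↥(Vfil m r k),
          h k (Submodule.Quotient.mk x)
            = Submodule.Quotient.mk (⟨H x.1, hpres k hk x.1 x.2⟩ : ↥(Vfil m r k))) →
      (∃ hpres' : ∀ k, k ≤ r - 1 → ∀ x ∈ Vfil m r k, H' x ∈ Vfil m r k,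
        ∀ k, ∀ hk : k ≤ r - 1, ∀ x : ↥(Vfil m r k),
          h k (Submodule.Quotient.mk x)
            = Submodule.Quotient.mk (⟨H' x.1, hpres' k hk x.1 x.2⟩ : ↥(Vfil m r k))) →
      LinearMap.trace (TruncC m) (TruncC (m * r)) H
        = LinearMap.trace (TruncC m) (TruncC (m * r)) H') := by
  classical
  constructor
  · -- existence
    have hchoice : ∀ i : Fin r, ∃ v : ↥(Vfil m r (i : ℕ)),
        Submodule.Quotient.mk v
          = h i (Submodule.Quotient.mk ⟨wC (m * r) ^ (i : ℕ), wmem le_rfl⟩) :=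
      fun i => Submodule.Quotient.mk_surjective _ _
    choose v hv using hchoice
    haveI : SMulCommClass (TruncC m) ℂ (TruncC (m * r)) := ⟨fun a c x => by
      rw [Algebra.smul_def a, Algebra.smul_def a]
      exact mul_smul_comm c _ x⟩
    set H : TruncC (m * r) →ₗ[TruncC m] TruncC (m * r) :=
      (bB m r hm hr halg).constr ℂ (fun i => (v i : TruncC (m * r))) with hHdef
    have Hb : ∀ i : Fin r, H (wC (m * r) ^ (i : ℕ)) = v i := by
      intro i
      rw [hHdef, ← bB_apply m r hm hr halg i, Module.Basis.constr_basis]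
    -- the key computation on powers of w
    have keyPow : ∀ k, k ≤ r - 1 → ∀ j, ∀ hkj : k ≤ j, j < k + r →
        ∃ hmem : H (wC (m * r) ^ j) ∈ Vfil m r j,
          h k (Submodule.Quotient.mk ⟨wC (m * r) ^ j, wmem hkj⟩)
            = Submodule.Quotient.mk
                (⟨H (wC (m * r) ^ j), Vfil_antitone m r hkj hmem⟩ : ↥(Vfil m r k)) := by
      intro k hk j hkj hjr
      by_cases hjr' : j < r
      · have hHj : H (wC (m * r) ^ j) = ↑(v ⟨j, hjr'⟩) := Hb ⟨j, hjr'⟩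
        have hmemj : H (wC (m * r) ^ j) ∈ Vfil m r j := by
          rw [hHj]; exact (v ⟨j, hjr'⟩).2
        refine ⟨hmemj, ?_⟩
        have base : h j (Submodule.Quotient.mk ⟨wC (m * r) ^ j, wmem le_rfl⟩)
            = (Submodule.Quotient.mk ⟨(v ⟨j, hjr'⟩ : TruncC (m * r)),
                (v ⟨j, hjr'⟩).2⟩ : Vbar m r j) := (hv ⟨j, hjr'⟩).symm
        have hd := descend m r h hcompat (show j ≤ r - 1 by omega)
          (wmem le_rfl) (v ⟨j, hjr'⟩).2 base (j - k) k (by omega)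
        exact hd.trans (mkV_congr m r hHj.symm
          (Vfil_antitone m r hkj ((v ⟨j, hjr'⟩).2)) (Vfil_antitone m r hkj hmemj))
      · have hsr : j - r < r := by omega
        have hHs : H (wC (m * r) ^ (j - r)) = ↑(v ⟨j - r, hsr⟩) := Hb ⟨j - r, hsr⟩
        have hwj : wC (m * r) ^ j = wC m • wC (m * r) ^ (j - r) := by
          rw [Algebra.smul_def, halg, ← pow_add]
          congr 1; omega
        have hHj : H (wC (m * r) ^ j) = wC m • ↑(v ⟨j - r, hsr⟩) := by
          rw [hwj, map_smul, hHs]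
        have hmemj : H (wC (m * r) ^ j) ∈ Vfil m r j := by
          rw [hHj]
          have := zsmulMemV1 m r halg (v ⟨j - r, hsr⟩).2
          have hj' : r + (j - r) = j := by omega
          rwa [hj'] at this
        refine ⟨hmemj, ?_⟩
        have base : h (j - r) (Submodule.Quotient.mk ⟨wC (m * r) ^ (j - r), wmem le_rfl⟩)
            = (Submodule.Quotient.mk ⟨(v ⟨j - r, hsr⟩ : TruncC (m * r)),
                (v ⟨j - r, hsr⟩).2⟩ : Vbar m r (j - r)) := (hv ⟨j - r, hsr⟩).symm
        have h0 := descend m r h hcompat (show j - r ≤ r - 1 by omega)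
          (wmem le_rfl) (v ⟨j - r, hsr⟩).2 base (j - r) 0 (by omega)
        have e := congrArg (zBar m r hm hr halg) h0
        rw [← LinearMap.comp_apply, hz, LinearMap.comp_apply, zBar_mk, zBar_mk] at e
        have mx : wC (m * r) ^ j ∈ Vfil m r (r - 1) := wmem (by omega)
        have my : H (wC (m * r) ^ j) ∈ Vfil m r (r - 1) :=
          Vfil_antitone m r (by omega) hmemj
        have base2 : h (r - 1) (Submodule.Quotient.mk ⟨wC (m * r) ^ j, mx⟩)
            = (Submodule.Quotient.mk ⟨H (wC (m * r) ^ j), my⟩ : Vbar m r (r - 1)) := by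
          have t1 : h (r - 1) (Submodule.Quotient.mk ⟨wC (m * r) ^ j, mx⟩)
              = h (r - 1) (Submodule.Quotient.mk
                  ⟨wC m • wC (m * r) ^ (j - r),
                    Vfil_antitone m r (by omega)
                      (zsmulMemV1 m r halg (wmem (Nat.le_refl _)))⟩) :=
            congrArg _ (mkV_congr m r hwj _ _)
          have t2 : (Submodule.Quotient.mk
                ⟨wC m • ↑(v ⟨j - r, hsr⟩),
                  Vfil_antitone m r (by omega)
                    (zsmulMemV1 m r halg (v ⟨j - r, hsr⟩).2)⟩ : Vbar m r (r - 1))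
              = Submodule.Quotient.mk ⟨H (wC (m * r) ^ j), my⟩ :=
            mkV_congr m r hHj.symm _ _
          exact t1.trans (e.trans t2)
        exact descend m r h hcompat le_rfl mx my base2 (r - 1 - k) k (by omega)
    have hpres : ∀ k, k ≤ r - 1 → ∀ x ∈ Vfil m r k, H x ∈ Vfil m r k := by
      intro k hk x hx
      obtain ⟨a, ha⟩ := Vfil_decomp m r hm hr halg hx
      rw [ha, map_sum]
      refine Submodule.sum_mem _ fun i _ => ?_
      rw [map_smul]
      refine Submodule.smul_mem _ _ ?_
      obtain ⟨hmem, -⟩ := keyPow k hk (k + i) (by omega) (by have := i.isLt; omega)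
      exact Vfil_antitone m r (by omega) hmem
    refine ⟨H, hpres, ?_⟩
    intro k hk x
    obtain ⟨a, ha⟩ := Vfil_decomp m r hm hr halg x.2
    have hkey := fun i : Fin r =>
      keyPow k hk (k + i) (by omega) (by have := i.isLt; omega)
    have hx : x = ∑ i : Fin r,
        a i • (⟨wC (m * r) ^ (k + (i : ℕ)), wmem (by omega)⟩ : ↥(Vfil m r k)) := by
      apply Subtype.ext
      rw [ha]
      simp
    have mk_sum : ∀ (s : Fin r → ↥(Vfil m r k)) (a : Fin r → TruncC m),
        (Submodule.Quotient.mk (∑ i : Fin r, a i • s i) : Vbar m r k)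
          = ∑ i : Fin r, a i • (Submodule.Quotient.mk (s i) : Vbar m r k) := by
      intro s a
      rw [← Submodule.mkQ_apply, map_sum]
      simp [Submodule.mkQ_apply]
    have hsum2 : (⟨H x.1, hpres k hk x.1 x.2⟩ : ↥(Vfil m r k))
        = ∑ i : Fin r, a i • (⟨H (wC (m * r) ^ (k + (i : ℕ))),
            Vfil_antitone m r (by omega) (hkey i).choose⟩ : ↥(Vfil m r k)) := by
      apply Subtype.ext
      simp only [Submodule.coe_sum, SetLike.val_smul]
      rw [ha, map_sum]
      simp
    calc h k (Submodule.Quotient.mk x)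
        = h k (∑ i : Fin r, a i • (Submodule.Quotient.mk
            (⟨wC (m * r) ^ (k + (i : ℕ)), wmem (by omega)⟩ : ↥(Vfil m r k)))) := by
          rw [hx, mk_sum]
      _ = ∑ i : Fin r, a i • h k (Submodule.Quotient.mk
            (⟨wC (m * r) ^ (k + (i : ℕ)), wmem (by omega)⟩ : ↥(Vfil m r k))) := by
          rw [map_sum]; simp
      _ = ∑ i : Fin r, a i • (Submodule.Quotient.mk
            (⟨H (wC (m * r) ^ (k + (i : ℕ))),
              Vfil_antitone m r (by omega) (hkey i).choose⟩ : ↥(Vfil m r k))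
            : Vbar m r k) := by
          exact Finset.sum_congr rfl fun i _ =>
            congrArg (fun t => a i • t) ((hkey i).choose_spec)
      _ = Submodule.Quotient.mk (⟨H x.1, hpres k hk x.1 x.2⟩ : ↥(Vfil m r k)) := by
          rw [hsum2, mk_sum]
  · -- uniqueness of trace
    rintro H1 H2 ⟨p1, e1⟩ ⟨p2, e2⟩
    have hdmem : ∀ k : Fin r,
        H1 (wC (m * r) ^ (k : ℕ)) - H2 (wC (m * r) ^ (k : ℕ))
          ∈ Vfil m r (m * r - r + k + 1) := by
      intro k
      have hk : (k : ℕ) ≤ r - 1 := by have := k.isLt; omega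
      have q1 := e1 k hk ⟨wC (m * r) ^ (k : ℕ), wmem le_rfl⟩
      have q2 := e2 k hk ⟨wC (m * r) ^ (k : ℕ), wmem le_rfl⟩
      have heq := q1.symm.trans q2
      rw [Submodule.Quotient.eq] at heq
      simpa [Vq, Submodule.mem_comap] using heq
    rw [← sub_eq_zero, ← map_sub]
    rw [LinearMap.trace_eq_matrix_trace (TruncC m) (bB m r hm hr halg), Matrix.trace]
    refine Finset.sum_eq_zero fun k _ => ?_
    rw [Matrix.diag_apply, LinearMap.toMatrix_apply, bB_apply]
    have hd : (H1 - H2) (wC (m * r) ^ (k : ℕ)) ∈ Vfil m r (m * r - r + k + 1) := by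
      rw [LinearMap.sub_apply]; exact hdmem k
    obtain ⟨a, ha⟩ := Vfil_decomp m r hm hr halg hd
    rw [ha, map_sum, Finsupp.finset_sum_apply]
    refine Finset.sum_eq_zero fun i _ => ?_
    rw [map_smul, repr_pow m r hm hr halg, Finsupp.smul_apply]
    set e : ℕ := m * r - r + (k : ℕ) + 1 + (i : ℕ) with he
    by_cases hge : m * r ≤ e
    · have hdiv : m ≤ e / r := (Nat.le_div_iff_mul_le hr).mpr hge
      rw [wpow_eq_zero hdiv, Finsupp.single_zero, Finsupp.coe_zero, Pi.zero_apply,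
        smul_zero]
    · have hmr : (m - 1) * r = m * r - 1 * r := Nat.sub_mul m 1 r
      have hlt : (k : ℕ) + 1 + (i : ℕ) < r := by
        have := k.isLt; have := i.isLt; omega
      have hmod : e % r = (k : ℕ) + 1 + (i : ℕ) := by
        have h1 : e = ((k : ℕ) + 1 + (i : ℕ)) + (m - 1) * r := by omega
        rw [h1, Nat.add_mul_mod_self_right, Nat.mod_eq_of_lt hlt]
      rw [Finsupp.single_eq_of_ne, smul_zero]
      intro hcontra
      have := congrArg Fin.val hcontra
      simp only [Fin.val_mk] at this
      omega


end
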